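/- arXiv:2209.09948 — 4 statements merged into one kernel-verified Lean document; each statement's English description precedes it below -/
import Mathlib

section
/- Let t ≥ 2, let 𝔞₁,…,𝔞_t be squarefree monomial ideals of S, let 𝔞 = ⋂_{j=1}^t 𝔞_j, and let 1 ≤ i ≤ n. Then the recomposition of 𝔞 with respect to the index i equals the intersection over j of the recompositions of the 𝔞_j with respect to the index i. -/
open MvPolynomial

/-- A squarefree monomial ideal of `S = F₂[x₁,…,xₙ,y₁,…,yₙ]` (the `x`-variables indexed by
`Sum.inl`, the `y`-variables by `Sum.inr`): an ideal generated by finitely many squarefree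
monomials. -/
def IsSqfreeMonomialIdeal {n : ℕ}
    (a : Ideal (MvPolynomial (Fin n ⊕ Fin n) (ZMod 2))) : Prop :=
  ∃ G : Finset (Finset (Fin n ⊕ Fin n)),
    a = Ideal.span ((fun s => ∏ i ∈ s, X i) '' (G : Set (Finset (Fin n ⊕ Fin n))))

/-- A monomial prime of `S`: an ideal generated by a subset of the variables. -/
def IsMonomialPrime {n : ℕ}
    (p : Ideal (MvPolynomial (Fin n ⊕ Fin n) (ZMod 2))) : Prop :=
  ∃ V : Set (Fin n ⊕ Fin n), p = Ideal.span (X '' V)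

/-- The recomposition of `a`: the intersection of those minimal primes `p` of `a` such that
there is no index `i` with both `xᵢ ∈ p` and `yᵢ ∈ p` (`⊤` if there is no such prime). -/
noncomputable def recomp {n : ℕ} (a : Ideal (MvPolynomial (Fin n ⊕ Fin n) (ZMod 2))) :
    Ideal (MvPolynomial (Fin n ⊕ Fin n) (ZMod 2)) :=
  sInf {p ∈ a.minimalPrimes | ¬∃ i : Fin n, X (Sum.inl i) ∈ p ∧ X (Sum.inr i) ∈ p}

/-- The recomposition of `a` with respect to the index `i`: the intersection of those minimal
primes `p` of `a` such that not both `xᵢ ∈ p` and `yᵢ ∈ p` (`⊤` if there is no such prime). -/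
noncomputable def recompAt {n : ℕ} (i : Fin n)
    (a : Ideal (MvPolynomial (Fin n ⊕ Fin n) (ZMod 2))) :
    Ideal (MvPolynomial (Fin n ⊕ Fin n) (ZMod 2)) :=
  sInf {p ∈ a.minimalPrimes | ¬(X (Sum.inl i) ∈ p ∧ X (Sum.inr i) ∈ p)}
/-- Lemma "combinecanonical": recomposing an intersection `⋂ 𝔞_j` of squarefree monomial ideals
with respect to an index `i` is the same as intersecting the recompositions with respect to
`i`. -/
theorem stmt16 {n t : ℕ} (hn : 0 < n) (ht : 2 ≤ t)
    (aj : Fin t → Ideal (MvPolynomial (Fin n ⊕ Fin n) (ZMod 2)))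
    (haj : ∀ j, IsSqfreeMonomialIdeal (aj j)) (i : Fin n) :
    recompAt i (⨅ j, aj j) = ⨅ j, recompAt i (aj j) := by
  have key : ∀ (p : Ideal (MvPolynomial (Fin n ⊕ Fin n) (ZMod 2))),
      p.IsPrime → (⨅ j, aj j) ≤ p → ∃ j, aj j ≤ p := by
    intro p hp hle
    have : Finset.univ.inf aj ≤ p := by
      rw [Finset.inf_eq_iInf]
      simpa using hle
    obtain ⟨j, -, hj⟩ := hp.inf_le'.mp this
    exact ⟨j, hj⟩
  apply le_antisymm
  · -- recompAt i (⨅ aj) ≤ each recompAt i (aj j)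
    refine le_iInf fun j => le_sInf fun p hp => ?_
    obtain ⟨hpmin, hcond⟩ := hp
    have hle : (⨅ j, aj j) ≤ p := le_trans (iInf_le _ j) hpmin.1.2
    obtain ⟨q, hq, hqp⟩ := @Ideal.exists_minimalPrimes_le _ _ _ p hpmin.1.1 hle
    have hcondq : ¬(X (Sum.inl i) ∈ q ∧ X (Sum.inr i) ∈ q) := by
      intro ⟨h1, h2⟩
      exact hcond ⟨hqp h1, hqp h2⟩
    exact le_trans (sInf_le ⟨hq, hcondq⟩) hqp
  · -- each side
    refine le_sInf fun p hp => ?_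
    obtain ⟨hpmin, hcond⟩ := hp
    have hprime := hpmin.1.1
    obtain ⟨j, hj⟩ := key p hprime hpmin.1.2
    have hpminj : p ∈ (aj j).minimalPrimes := by
      refine ⟨⟨hprime, hj⟩, fun q hq hqp => ?_⟩
      exact hpmin.2 ⟨hq.1, le_trans (iInf_le _ j) hq.2⟩ hqp
    exact le_trans (iInf_le _ j) (sInf_le ⟨hpminj, hcond⟩)
end

section
/- Let A be a neural ideal of R. Then A ⊆ d(𝒫(A)), where d(𝒫(A)) denotes the image ideal Ideal.map d (𝒫(A)). Moreover, if A is a pseudomonomial prime of R, then A = d(𝒫(A)). -/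
open MvPolynomial

/-- The pseudomonomial `∏_{i∈σ} xᵢ · ∏_{i∈τ} (1 - xᵢ)` in `F₂[x₁,…,xₙ]`. -/
noncomputable def psm (n : ℕ) (σ τ : Finset (Fin n)) : MvPolynomial (Fin n) (ZMod 2) :=
  (∏ i ∈ σ, X i) * ∏ i ∈ τ, (1 - X i)

/-- A polynomial of `F₂[x₁,…,xₙ]` is a pseudomonomial if it has the form
`∏_{i∈σ} xᵢ · ∏_{i∈τ} (1 - xᵢ)` for disjoint `σ τ`. -/
def IsPseudomonomial {n : ℕ} (f : MvPolynomial (Fin n) (ZMod 2)) : Prop :=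
  ∃ σ τ : Finset (Fin n), Disjoint σ τ ∧ f = psm n σ τ

/-- The canonical form of an ideal `J`: the set of minimal pseudomonomials of `J`,
i.e. pseudomonomials `f ∈ J` such that no pseudomonomial `g ≠ f` dividing `f` lies in `J`. -/
def CF {n : ℕ} (J : Ideal (MvPolynomial (Fin n) (ZMod 2))) :
    Set (MvPolynomial (Fin n) (ZMod 2)) :=
  {f | IsPseudomonomial f ∧ f ∈ J ∧
    ∀ g : MvPolynomial (Fin n) (ZMod 2), IsPseudomonomial g → g ∣ f → g ≠ f → g ∉ J}
/-- The polarization `𝒫(f) = ∏_{i∈σ} xᵢ · ∏_{i∈τ} yᵢ` in `S = F₂[x₁,…,xₙ,y₁,…,yₙ]`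
(the `x`-variables are indexed by `Sum.inl`, the `y`-variables by `Sum.inr`). -/
noncomputable def polMon (n : ℕ) (σ τ : Finset (Fin n)) :
    MvPolynomial (Fin n ⊕ Fin n) (ZMod 2) :=
  (∏ i ∈ σ, X (Sum.inl i)) * ∏ i ∈ τ, X (Sum.inr i)

/-- The polarization `𝒫(A)` of an ideal `A` of `R`: the ideal of `S` generated by the
polarizations of all pseudomonomials lying in `A`. -/
noncomputable def polIdeal {n : ℕ} (A : Ideal (MvPolynomial (Fin n) (ZMod 2))) :
    Ideal (MvPolynomial (Fin n ⊕ Fin n) (ZMod 2)) :=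
  Ideal.span {m | ∃ σ τ : Finset (Fin n), Disjoint σ τ ∧ psm n σ τ ∈ A ∧ m = polMon n σ τ}

/-- A neural ideal: an ideal of `R` generated by finitely many pseudomonomials. -/
def IsNeuralIdeal {n : ℕ} (A : Ideal (MvPolynomial (Fin n) (ZMod 2))) : Prop :=
  ∃ G : Finset (MvPolynomial (Fin n) (ZMod 2)),
    (∀ f ∈ G, IsPseudomonomial f) ∧ A = Ideal.span (G : Set (MvPolynomial (Fin n) (ZMod 2)))

/-- The depolarization map `d : S → R`, `xᵢ ↦ xᵢ`, `yᵢ ↦ 1 - xᵢ`. -/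
noncomputable def depol (n : ℕ) :
    MvPolynomial (Fin n ⊕ Fin n) (ZMod 2) →+* MvPolynomial (Fin n) (ZMod 2) :=
  (MvPolynomial.aeval (R := ZMod 2) (Sum.elim X (fun i => 1 - X i))).toRingHom
/-- A pseudomonomial prime of `R`: an ideal generated by `{xᵢ : i ∈ σ} ∪ {1-xᵢ : i ∈ τ}`
for disjoint `σ, τ`. -/
def IsPseudomonomialPrime {n : ℕ} (p : Ideal (MvPolynomial (Fin n) (ZMod 2))) : Prop :=
  ∃ σ τ : Finset (Fin n), Disjoint σ τ ∧
    p = Ideal.span ((X '' (σ : Set (Fin n))) ∪ ((fun i => 1 - X i) '' (τ : Set (Fin n))))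


lemma depol_polMon {n : ℕ} (σ τ : Finset (Fin n)) :
    depol n (polMon n σ τ) = psm n σ τ := by
  simp [depol, polMon, psm, map_prod]

/-- Lemma "polarization"(7): `A ⊆ d(𝒫(A))` for a neural ideal `A`, with equality when `A`
is a pseudomonomial prime. -/
theorem stmt17 {n : ℕ} (hn : 0 < n)
    (A : Ideal (MvPolynomial (Fin n) (ZMod 2))) (hA : IsNeuralIdeal A) :
    A ≤ Ideal.map (depol n) (polIdeal A) ∧
      (IsPseudomonomialPrime A → A = Ideal.map (depol n) (polIdeal A)) := by
  have hle : A ≤ Ideal.map (depol n) (polIdeal A) := by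
    obtain ⟨G, hG, rfl⟩ := hA
    rw [Ideal.span_le]
    intro f hf
    obtain ⟨σ, τ, hdisj, rfl⟩ := hG f hf
    have hmem : polMon n σ τ ∈ polIdeal (Ideal.span (G : Set (MvPolynomial (Fin n) (ZMod 2)))) :=
      Ideal.subset_span ⟨σ, τ, hdisj, Ideal.subset_span hf, rfl⟩
    have := Ideal.mem_map_of_mem (depol n) hmem
    rwa [depol_polMon] at this
  have hge : Ideal.map (depol n) (polIdeal A) ≤ A := by
    rw [Ideal.map_le_iff_le_comap, polIdeal, Ideal.span_le]
    rintro m ⟨σ, τ, hdisj, hmem, rfl⟩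
    simpa [Ideal.mem_comap, depol_polMon] using hmem
  exact ⟨hle, fun _ => le_antisymm hle hge⟩
end

section
/- Let σ, τ ⊆ {1,…,n} be disjoint and let p be the ideal of R generated by {xᵢ : i ∈ σ} ∪ {1−xᵢ : i ∈ τ} (a pseudomonomial prime). Then CF(p) = {xᵢ : i ∈ σ} ∪ {1−xᵢ : i ∈ τ}; that is, every pseudomonomial prime is in canonical form. -/
open MvPolynomial

lemma eval_psm {n : ℕ} (σ τ : Finset (Fin n)) (a : Fin n → ZMod 2) :
    eval a (psm n σ τ) = (∏ i ∈ σ, a i) * ∏ i ∈ τ, (1 - a i) := by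
  simp [psm]

lemma span_eval {n : ℕ} {S : Set (MvPolynomial (Fin n) (ZMod 2))}
    {f : MvPolynomial (Fin n) (ZMod 2)} (hf : f ∈ Ideal.span S)
    (a : Fin n → ZMod 2) (h : ∀ g ∈ S, eval a g = 0) : eval a f = 0 := by
  have hle : Ideal.span S ≤ RingHom.ker (eval a) := Ideal.span_le.mpr (fun g hg => h g hg)
  exact hle hf

lemma dvd_eval {n : ℕ} {f g : MvPolynomial (Fin n) (ZMod 2)} (h : f ∣ g)
    (a : Fin n → ZMod 2) (h0 : eval a f = 0) : eval a g = 0 := by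
  have := map_dvd (eval a) h
  rw [h0] at this
  exact zero_dvd_iff.mp this

lemma psm_X {n : ℕ} (i : Fin n) : psm n {i} ∅ = X i := by simp [psm]
lemma psm_one_sub_X {n : ℕ} (i : Fin n) : psm n ∅ {i} = 1 - X i := by simp [psm]

lemma X_is_psm {n : ℕ} (i : Fin n) : IsPseudomonomial (X i : MvPolynomial (Fin n) (ZMod 2)) :=
  ⟨{i}, ∅, by simp, (psm_X i).symm⟩
lemma one_sub_X_is_psm {n : ℕ} (i : Fin n) :
    IsPseudomonomial (1 - X i : MvPolynomial (Fin n) (ZMod 2)) :=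
  ⟨∅, {i}, by simp, (psm_one_sub_X i).symm⟩


/-- Lemma "polarization"(4): every pseudomonomial prime is in canonical form, i.e. its canonical
form is exactly its set of generators `{xᵢ : i ∈ σ} ∪ {1-xᵢ : i ∈ τ}`. -/
theorem stmt18 {n : ℕ} (hn : 0 < n) (σ τ : Finset (Fin n)) (hd : Disjoint σ τ) :
    CF (Ideal.span ((X '' (σ : Set (Fin n))) ∪
        ((fun i => 1 - X i) '' (τ : Set (Fin n))))) =
      (X '' (σ : Set (Fin n))) ∪ ((fun i => 1 - X i) '' (τ : Set (Fin n))) := by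
  set S : Set (MvPolynomial (Fin n) (ZMod 2)) :=
    (X '' (σ : Set (Fin n))) ∪ ((fun i => 1 - X i) '' (τ : Set (Fin n))) with hS
  -- the "witness point" used to show the ideal is proper
  have hgen0 : ∀ g ∈ S, eval (fun k => if k ∈ τ then 1 else 0) g = 0 := by
    rintro g (⟨i, hi, rfl⟩ | ⟨i, hi, rfl⟩)
    · have : i ∉ τ := fun h => (Finset.disjoint_left.mp hd hi) h
      simp [this]
    · have hi' : i ∈ τ := hi
      simp [hi']
  have hone : (1 : MvPolynomial (Fin n) (ZMod 2)) ∉ Ideal.span S := by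
    intro h1
    have := span_eval h1 (fun k => if k ∈ τ then 1 else 0) hgen0
    simp at this
  ext f
  constructor
  · rintro ⟨⟨σ', τ', hd', rfl⟩, hmem, hmin⟩
    -- there must be i ∈ σ ∩ σ' or i ∈ τ ∩ τ'
    by_cases hσ : ∃ i, i ∈ σ ∧ i ∈ σ'
    · obtain ⟨i, hiσ, hiσ'⟩ := hσ
      have hgS : (X i : MvPolynomial (Fin n) (ZMod 2)) ∈ S := Or.inl ⟨i, hiσ, rfl⟩
      have hdvd : (X i : MvPolynomial (Fin n) (ZMod 2)) ∣ psm n σ' τ' :=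
        Dvd.dvd.mul_right (Finset.dvd_prod_of_mem _ hiσ') _
      by_cases heq : (X i : MvPolynomial (Fin n) (ZMod 2)) = psm n σ' τ'
      · rw [← heq]; exact hgS
      · exact absurd (Ideal.subset_span hgS) (hmin _ (X_is_psm i) hdvd heq)
    · by_cases hτ : ∃ i, i ∈ τ ∧ i ∈ τ'
      · obtain ⟨i, hiτ, hiτ'⟩ := hτ
        have hgS : (1 - X i : MvPolynomial (Fin n) (ZMod 2)) ∈ S := Or.inr ⟨i, hiτ, rfl⟩
        have hdvd : (1 - X i : MvPolynomial (Fin n) (ZMod 2)) ∣ psm n σ' τ' :=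
          Dvd.dvd.mul_left (Finset.dvd_prod_of_mem _ hiτ') _
        by_cases heq : (1 - X i : MvPolynomial (Fin n) (ZMod 2)) = psm n σ' τ'
        · rw [← heq]; exact hgS
        · exact absurd (Ideal.subset_span hgS) (hmin _ (one_sub_X_is_psm i) hdvd heq)
      · exfalso
        push_neg at hσ hτ
        -- evaluate at indicator of τ ∪ σ'
        set a : Fin n → ZMod 2 := fun k => if k ∈ τ ∨ k ∈ σ' then 1 else 0 with ha
        have h0 : ∀ g ∈ S, eval a g = 0 := by
          rintro g (⟨i, hi, rfl⟩ | ⟨i, hi, rfl⟩)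
          · have h1 : i ∉ τ := fun h => (Finset.disjoint_left.mp hd hi) h
            have h2 : i ∉ σ' := hσ i hi
            simp [ha, h1, h2]
          · have hi' : i ∈ τ := hi
            simp [ha, hi']
        have := span_eval hmem a h0
        rw [eval_psm] at this
        have e1 : ∀ i ∈ σ', a i = 1 := by
          intro i hi; simp [ha, hi]
        have e2 : ∀ i ∈ τ', (1 : ZMod 2) - a i = 1 := by
          intro i hi
          have h1 : i ∉ τ := fun h => hτ i h hi
          have h2 : i ∉ σ' := fun h => (Finset.disjoint_left.mp hd' h) hi
          simp [ha, h1, h2]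
        rw [Finset.prod_congr rfl e1, Finset.prod_congr rfl e2] at this
        simp at this
  · rintro (⟨i, hi, rfl⟩ | ⟨i, hi, rfl⟩)
    · refine ⟨X_is_psm i, Ideal.subset_span (Or.inl ⟨i, hi, rfl⟩), ?_⟩
      rintro g ⟨σ'', τ'', hd'', rfl⟩ hdvd hne hg
      -- τ'' = ∅
      have hτe : τ'' = ∅ := by
        by_contra h
        obtain ⟨j, hj⟩ := Finset.nonempty_iff_ne_empty.mpr h
        have hdj : (1 - X j : MvPolynomial (Fin n) (ZMod 2)) ∣ X i :=
          dvd_trans (Dvd.dvd.mul_left (Finset.dvd_prod_of_mem _ hj) _) hdvd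
        have := dvd_eval hdj (fun _ => 1) (by simp)
        simp at this
      -- σ'' ⊆ {i}
      have hσs : σ'' ⊆ {i} := by
        intro j hj
        have hdj : (X j : MvPolynomial (Fin n) (ZMod 2)) ∣ X i :=
          dvd_trans (Dvd.dvd.mul_right (Finset.dvd_prod_of_mem _ hj) _) hdvd
        by_contra hji
        simp only [Finset.mem_singleton] at hji
        have := dvd_eval hdj (fun k => if k = j then 0 else 1) (by simp)
        simp [Ne.symm hji] at this
      rcases Finset.subset_singleton_iff.mp hσs with h | h
      · rw [h, hτe, show psm n ∅ ∅ = 1 by simp [psm]] at hg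
        exact hone hg
      · exact hne (by rw [h, hτe, psm_X])
    · refine ⟨one_sub_X_is_psm i, Ideal.subset_span (Or.inr ⟨i, hi, rfl⟩), ?_⟩
      rintro g ⟨σ'', τ'', hd'', rfl⟩ hdvd hne hg
      have hσe : σ'' = ∅ := by
        by_contra h
        obtain ⟨j, hj⟩ := Finset.nonempty_iff_ne_empty.mpr h
        have hdj : (X j : MvPolynomial (Fin n) (ZMod 2)) ∣ 1 - X i :=
          dvd_trans (Dvd.dvd.mul_right (Finset.dvd_prod_of_mem _ hj) _) hdvd
        have := dvd_eval hdj (fun _ => 0) (by simp)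
        simp at this
      have hτs : τ'' ⊆ {i} := by
        intro j hj
        have hdj : (1 - X j : MvPolynomial (Fin n) (ZMod 2)) ∣ 1 - X i :=
          dvd_trans (Dvd.dvd.mul_left (Finset.dvd_prod_of_mem _ hj) _) hdvd
        by_contra hji
        simp only [Finset.mem_singleton] at hji
        have := dvd_eval hdj (fun k => if k = j then 1 else 0) (by simp)
        simp [Ne.symm hji] at this
      rcases Finset.subset_singleton_iff.mp hτs with h | h
      · rw [h, hσe, show psm n ∅ ∅ = 1 by simp [psm]] at hg
        exact hone hg
      · exact hne (by rw [h, hσe, psm_one_sub_X])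
end

section
/- Let σ, τ ⊆ {1,…,n} be disjoint and let p be the ideal of R generated by {xᵢ : i ∈ σ} ∪ {1−xᵢ : i ∈ τ} (a pseudomonomial prime). Then 𝒫(p) equals the ideal of S generated by {xᵢ : i ∈ σ} ∪ {yᵢ : i ∈ τ}, and this ideal is a prime ideal of S. -/
open MvPolynomial

section aux
variable {ι : Type*}

noncomputable def retr (u : Set ι) [DecidablePred (· ∈ u)] :
    MvPolynomial ι (ZMod 2) →+* MvPolynomial ι (ZMod 2) :=
  (aeval (fun i => if i ∈ u then (0 : MvPolynomial ι (ZMod 2)) else X i)).toRingHom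

lemma sub_retr_mem (u : Set ι) [DecidablePred (· ∈ u)] (f : MvPolynomial ι (ZMod 2)) :
    f - retr u f ∈ Ideal.span (X '' u : Set (MvPolynomial ι (ZMod 2))) := by
  induction f using MvPolynomial.induction_on with
  | C a => simp [retr]
  | add p q hp hq =>
      have : p + q - retr u (p + q) = (p - retr u p) + (q - retr u q) := by
        rw [map_add]; ring
      rw [this]; exact Ideal.add_mem _ hp hq
  | mul_X p i hp =>
      rw [show retr u (p * X i) = retr u p * retr u (X i) from map_mul _ _ _]
      have hXi : retr u (X i) = if i ∈ u then 0 else X i := by simp [retr]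
      by_cases hi : i ∈ u
      · rw [hXi, if_pos hi, mul_zero, sub_zero]
        exact Ideal.mul_mem_left _ _ (Ideal.subset_span ⟨i, hi, rfl⟩)
      · rw [hXi, if_neg hi, show p * X i - retr u p * X i = (p - retr u p) * X i by ring]
        exact Ideal.mul_mem_right _ _ hp

lemma span_X_eq_ker (u : Set ι) [DecidablePred (· ∈ u)] :
    Ideal.span (X '' u : Set (MvPolynomial ι (ZMod 2))) = RingHom.ker (retr u) := by
  refine le_antisymm (Ideal.span_le.2 ?_) (fun f hf => ?_)
  · rintro _ ⟨i, hi, rfl⟩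
    simp [RingHom.mem_ker, retr, hi]
  · have h := sub_retr_mem u f
    rw [RingHom.mem_ker] at hf
    rwa [hf, sub_zero] at h

lemma span_X_isPrime (u : Set ι) :
    (Ideal.span (X '' u : Set (MvPolynomial ι (ZMod 2)))).IsPrime := by
  classical
  rw [span_X_eq_ker]
  exact RingHom.ker_isPrime _

lemma X_mem_span_X_iff (u : Set ι) (j : ι) :
    (X j : MvPolynomial ι (ZMod 2)) ∈ Ideal.span (X '' u) ↔ j ∈ u := by
  rw [mem_ideal_span_X_image]
  constructor
  · intro h
    obtain ⟨i, hi, hne⟩ := h (Finsupp.single j 1) (by simp)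
    have : i = j := by
      by_contra hij
      exact hne (by simp [Finsupp.single_apply, Ne.symm hij])
    rwa [this] at hi
  · intro hj m hm
    refine ⟨j, hj, ?_⟩
    rw [support_X, Finset.mem_singleton] at hm
    simp [hm]

lemma one_sub_X_notMem (u : Set ι) (j : ι) :
    (1 - X j : MvPolynomial ι (ZMod 2)) ∉ Ideal.span (X '' u) := by
  rw [mem_ideal_span_X_image]
  intro h
  obtain ⟨i, hi, hne⟩ := h 0 (by
    rw [mem_support_iff]
    simp [coeff_sub])
  simp at hne

end aux

noncomputable def flipβ {n : ℕ} (τ : Finset (Fin n)) :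
    MvPolynomial (Fin n) (ZMod 2) →+* MvPolynomial (Fin n) (ZMod 2) :=
  (aeval (fun i => if i ∈ τ then 1 - X i else X i)).toRingHom

lemma flipβ_X {n : ℕ} (τ : Finset (Fin n)) (i : Fin n) :
    flipβ τ (X i) = if i ∈ τ then 1 - X i else X i := by
  simp [flipβ]

/-- Lemma "polarization"(5): the polarization of a pseudomonomial prime
`p = (xᵢ : i ∈ σ) + (1-xᵢ : i ∈ τ)` is the monomial prime `(xᵢ : i ∈ σ) + (yᵢ : i ∈ τ)`
of `S`, and it is prime. -/

theorem stmt19 {n : ℕ} (hn : 0 < n) (σ τ : Finset (Fin n)) (hd : Disjoint σ τ) :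
    polIdeal (Ideal.span ((X '' (σ : Set (Fin n))) ∪
        ((fun i => 1 - X i) '' (τ : Set (Fin n))))) =
      Ideal.span (((fun i => X (Sum.inl i)) '' (σ : Set (Fin n))) ∪
        ((fun i => X (Sum.inr i)) '' (τ : Set (Fin n)))
        : Set (MvPolynomial (Fin n ⊕ Fin n) (ZMod 2))) ∧
    (Ideal.span (((fun i => X (Sum.inl i)) '' (σ : Set (Fin n))) ∪
        ((fun i => X (Sum.inr i)) '' (τ : Set (Fin n)))
        : Set (MvPolynomial (Fin n ⊕ Fin n) (ZMod 2)))).IsPrime := by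
  classical
  have hVeq : (((fun i => X (Sum.inl i)) '' (σ : Set (Fin n))) ∪
      ((fun i => X (Sum.inr i)) '' (τ : Set (Fin n)))
      : Set (MvPolynomial (Fin n ⊕ Fin n) (ZMod 2))) =
      X '' ((Sum.inl '' (σ : Set (Fin n))) ∪ (Sum.inr '' (τ : Set (Fin n)))) := by
    rw [Set.image_union, Set.image_image, Set.image_image]
  have hVprime : (Ideal.span (((fun i => X (Sum.inl i)) '' (σ : Set (Fin n))) ∪
      ((fun i => X (Sum.inr i)) '' (τ : Set (Fin n)))
      : Set (MvPolynomial (Fin n ⊕ Fin n) (ZMod 2)))).IsPrime := by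
    rw [hVeq]; exact span_X_isPrime _
  haveI hq : (Ideal.span (X '' ((↑σ ∪ ↑τ) : Set (Fin n))
      : Set (MvPolynomial (Fin n) (ZMod 2)))).IsPrime :=
    span_X_isPrime _
  have hp_le : ∀ f ∈ Ideal.span ((X '' (σ : Set (Fin n))) ∪
      ((fun i => 1 - X i) '' (τ : Set (Fin n)))),
      flipβ τ f ∈ Ideal.span (X '' ((↑σ ∪ ↑τ) : Set (Fin n))
        : Set (MvPolynomial (Fin n) (ZMod 2))) := by
    intro f hf
    have hle : Ideal.span ((X '' (σ : Set (Fin n))) ∪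
        ((fun i => 1 - X i) '' (τ : Set (Fin n)))) ≤
        Ideal.comap (flipβ τ) (Ideal.span (X '' ((↑σ ∪ ↑τ) : Set (Fin n)))) := by
      rw [Ideal.span_le]
      rintro _ (⟨i, hi, rfl⟩ | ⟨i, hi, rfl⟩)
      · have hiτ : i ∉ τ := Finset.disjoint_left.1 hd (by exact_mod_cast hi)
        have : flipβ τ (X i) = X i := by rw [flipβ_X, if_neg hiτ]
        simp only [SetLike.mem_coe, Ideal.mem_comap, this]
        exact Ideal.subset_span ⟨i, Or.inl hi, rfl⟩
      · have hiτ : i ∈ τ := by exact_mod_cast hi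
        have : flipβ τ (1 - X i) = X i := by
          rw [map_sub, map_one, flipβ_X, if_pos hiτ, sub_sub_cancel]
        simp only [SetLike.mem_coe, Ideal.mem_comap, this]
        exact Ideal.subset_span ⟨i, Or.inr hi, rfl⟩
    exact hle hf
  refine ⟨le_antisymm ?_ ?_, hVprime⟩
  · rw [polIdeal, Ideal.span_le]
    rintro _ ⟨σ', τ', hd', hmem, rfl⟩
    have hβm := hp_le _ hmem
    rw [psm, map_mul, map_prod, map_prod] at hβm
    rcases hq.mem_or_mem hβm with h1 | h2
    · rw [Ideal.IsPrime.prod_mem_iff] at h1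
      obtain ⟨i, hi, hXi⟩ := h1
      rw [flipβ_X] at hXi
      by_cases hiτ : i ∈ τ
      · rw [if_pos hiτ] at hXi
        exact absurd hXi (one_sub_X_notMem _ i)
      · rw [if_neg hiτ, X_mem_span_X_iff] at hXi
        have hiσ : i ∈ (σ : Set (Fin n)) := by
          rcases hXi with h | h
          · exact h
          · exact absurd (by exact_mod_cast h) hiτ
        have hdvd : X (Sum.inl i) ∣ polMon n σ' τ' :=
          Dvd.dvd.mul_right (Finset.dvd_prod_of_mem _ hi) _
        obtain ⟨c, hc⟩ := hdvd
        rw [hc]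
        exact Ideal.mul_mem_right _ _ (Ideal.subset_span (Or.inl ⟨i, hiσ, rfl⟩))
    · rw [Ideal.IsPrime.prod_mem_iff] at h2
      obtain ⟨i, hi, hXi⟩ := h2
      by_cases hiτ : i ∈ τ
      · have hdvd : X (Sum.inr i) ∣ polMon n σ' τ' :=
          Dvd.dvd.mul_left (Finset.dvd_prod_of_mem _ hi) _
        obtain ⟨c, hc⟩ := hdvd
        rw [hc]
        exact Ideal.mul_mem_right _ _
          (Ideal.subset_span (Or.inr ⟨i, by exact_mod_cast hiτ, rfl⟩))
      · rw [map_sub, map_one, flipβ_X, if_neg hiτ] at hXi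
        exact absurd hXi (one_sub_X_notMem _ i)
  · rw [Ideal.span_le]
    rintro _ (⟨i, hi, rfl⟩ | ⟨i, hi, rfl⟩)
    · refine Ideal.subset_span ⟨{i}, ∅, by simp, ?_, by simp [polMon]⟩
      have h1 : psm n {i} ∅ = X i := by simp [psm]
      rw [h1]
      exact Ideal.subset_span (Or.inl ⟨i, hi, rfl⟩)
    · refine Ideal.subset_span ⟨∅, {i}, by simp, ?_, by simp [polMon]⟩
      have h1 : psm n ∅ {i} = 1 - X i := by simp [psm]
      rw [h1]
      exact Ideal.subset_span (Or.inr ⟨i, hi, rfl⟩)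
end
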